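/- Let A be an additive category and t an additive equivalence. A cochain complex X (with X_{n+3} ≅ tX_n compatibly, i.e. a candidate triangle) is contractible if and only if the associated 'class of identities' vanishes; concretely: if there exist morphisms k_i : tX_i → X_{i+2} with d_{i+3}∘k_i − k_{i+1}∘(t d_{i+1}) = (−1)^i α_i and α_{i+2}∘(t k_i)∘(t α_i^{−1}) = −k_{i+3} for all i, then X is a contractible complex. -/

import Mathlib

/-!
The first relation says that `k` is a null-homotopy of the degree-3 cochain map `(-1)^i α_i`,
so `α⁻¹ ≫ k`, with signs, is a contraction. Precisely, for
`h_i = (-1)^(i+1) • α_{i-3}⁻¹ ≫ k_{i-3}` that relation gives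
`h_i ≫ d = 𝟙 + (-1)^(i+1) • α_{i-3}⁻¹ ≫ t d ≫ k_{i-2}`, while the compatibility of `α`
with `d` turns `d ≫ h_{i+1}` into the same correction term with the opposite sign.
-/

open CategoryTheory Preadditive

namespace CandidateTriangle

variable {A : Type*} [Category A] {t : A ⥤ A} {X : ℤ → A}
  {d : ∀ i j : ℤ, i + 1 = j → (X i ⟶ X j)}
  {α : ∀ i j : ℤ, i + 3 = j → (t.obj (X i) ≅ X j)}

/- The hypotheses `hnat` and `hk1` with every index a free variable, so that they apply at
indices such as `n - 3` that are only propositionally equal to `i + 3`. -/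

variable (t d α) in
def IsCochainMapOfDegreeThree : Prop :=
  ∀ i i₁ j j₁ : ℤ, ∀ (hi : i + 1 = i₁) (hj : i + 3 = j) (hj₁ : i + 4 = j₁),
    t.map (d i i₁ hi) ≫ (α i₁ j₁ (by omega)).hom = (α i j hj).hom ≫ d j j₁ (by omega)

variable [Preadditive A]

variable (t d α) in
def IsSignedNullHomotopy (k : ∀ i j : ℤ, i + 2 = j → (t.obj (X i) ⟶ X j)) : Prop :=
  ∀ i i₁ i₂ i₃ : ℤ, ∀ (h₁ : i + 1 = i₁) (h₂ : i + 2 = i₂) (h₃ : i + 3 = i₃),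
    k i i₂ h₂ ≫ d i₂ i₃ (by omega) - t.map (d i i₁ h₁) ≫ k i₁ i₃ (by omega) =
      ((i.negOnePow : ℤˣ) : ℤ) • (α i i₃ h₃).hom

variable {k : ∀ i j : ℤ, i + 2 = j → (t.obj (X i) ⟶ X j)}

variable (α k) in
def contraction (i j : ℤ) (hij : j + 1 = i) : X i ⟶ X j :=
  (((i + 1).negOnePow : ℤˣ) : ℤ) • ((α (j - 2) i (by omega)).inv ≫ k (j - 2) j (by omega))

lemma contraction_eq (i j q : ℤ) (hij : j + 1 = i) (hq : q + 2 = j) :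
    contraction α k i j hij =
      (((i + 1).negOnePow : ℤˣ) : ℤ) • ((α q i (by omega)).inv ≫ k q j hq) := by
  obtain rfl : q = j - 2 := by omega
  rfl

lemma contraction_comp_d (hk : IsSignedNullHomotopy t d α k) (p q j i : ℤ) (hq : p + 1 = q)
    (hj : p + 2 = j) (hi : p + 3 = i) (hij : j + 1 = i) :
    contraction α k i j hij ≫ d j i hij =
      𝟙 (X i) + (((i + 1).negOnePow : ℤˣ) : ℤ) • ((α p i hi).inv ≫
        t.map (d p q hq) ≫ k q i (by omega)) := by
  have hsign : (((i + 1).negOnePow : ℤˣ) : ℤ) * ((p.negOnePow : ℤˣ) : ℤ) = 1 := by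
    rw [← Units.val_mul, (Int.negOnePow_eq_iff p (i + 1)).mpr ⟨-2, by omega⟩,
      Int.units_mul_self, Units.val_one]
  rw [contraction_eq i j p hij hj, Linear.smul_comp, Category.assoc,
    sub_eq_iff_eq_add.mp (hk p q j i hq hj hi), comp_add, Linear.comp_smul, Iso.inv_hom_id,
    smul_add, smul_smul, hsign, one_smul]

lemma d_comp_contraction (hα : IsCochainMapOfDegreeThree t d α) (p q i l : ℤ) (hq : p + 1 = q)
    (hi : p + 3 = i) (hil : i + 1 = l) :
    d i l hil ≫ contraction α k l i hil =
      -((((i + 1).negOnePow : ℤˣ) : ℤ) • ((α p i hi).inv ≫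
        t.map (d p q hq) ≫ k q i (by omega))) := by
  have hdα : (α p i hi).inv ≫ t.map (d p q hq) = d i l hil ≫ (α q l (by omega)).inv := by
    rw [Iso.inv_comp_eq, ← Category.assoc, ← hα p q i l hq hi (by omega), Category.assoc,
      Iso.hom_inv_id, Category.comp_id]
  subst hil
  rw [contraction_eq (i + 1) i q rfl (by omega), Linear.comp_smul, reassoc_of% hdα,
    Int.negOnePow_succ, Units.val_neg, neg_smul]

end CandidateTriangle

open CandidateTriangle in
/-- Let `A` be an additive category and `t` an additive (auto)equivalence. A
candidate triangle, i.e. a cochain complex `X` (here `d i j : X i ⟶ X j` for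
`j = i + 1`) together with a compatible degree-3 isomorphism `α : tX ≅ X`, is
contractible as soon as its "class of identities" vanishes; concretely: if there
exist morphisms `k i : t(X i) ⟶ X (i+2)` with
`d_{i+3} ∘ k_i − k_{i+1} ∘ (t d_{i+1}) = (−1)^i α_i` and
`α_{i+2} ∘ (t k_i) ∘ (t α_i⁻¹) = − k_{i+3}` for all `i`, then `X` admits a chain
contraction `h` with `1 = h d + d h`. -/
theorem stmt3 {A : Type*} [Category A] [Preadditive A]
    (t : A ⥤ A)
    (X : ℤ → A) (d : ∀ i j : ℤ, i + 1 = j → (X i ⟶ X j))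
    (α : ∀ i j : ℤ, i + 3 = j → (t.obj (X i) ≅ X j))
    (hnat : ∀ i : ℤ, t.map (d i (i+1) rfl) ≫ (α (i+1) (i+4) (by omega)).hom =
      (α i (i+3) rfl).hom ≫ d (i+3) (i+4) (by omega))
    (k : ∀ i j : ℤ, i + 2 = j → (t.obj (X i) ⟶ X j))
    (hk1 : ∀ i : ℤ, k i (i+2) rfl ≫ d (i+2) (i+3) (by omega) -
        t.map (d i (i+1) rfl) ≫ k (i+1) (i+3) (by omega) =
        ((Int.negOnePow i : ℤˣ) : ℤ) • (α i (i+3) rfl).hom) :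
    ∃ h : ∀ i j : ℤ, j + 1 = i → (X i ⟶ X j),
      ∀ n : ℤ, 𝟙 (X n) = d n (n+1) rfl ≫ h (n+1) n rfl +
        h n (n-1) (by omega) ≫ d (n-1) n (by omega) := by
  have hα : IsCochainMapOfDegreeThree t d α := by
    rintro i _ _ _ rfl rfl rfl
    exact hnat i
  have hk : IsSignedNullHomotopy t d α k := by
    rintro i _ _ _ rfl rfl rfl
    exact hk1 i
  refine ⟨contraction α k, fun n => ?_⟩
  rw [d_comp_contraction hα (n - 3) (n - 2) n (n + 1) (by omega) (by omega) rfl,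
    contraction_comp_d hk (n - 3) (n - 2) (n - 1) n (by omega) (by omega) (by omega)]
  abel
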